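/- The Shannon entropy of the temperature-scaled softmax is nondecreasing in the temperature γ: if 0 < γ₁ ≤ γ₂ then H(p(γ₁)) ≤ H(p(γ₂)). -/

import Mathlib

/-! With inverse temperature `β = 1/γ`, write `Z(β) = ∑ exp (β r_j)` and `E(β) = ∑ p_j(β) r_j`;
then `H(β) = log Z(β) - β E(β)`. Gibbs' inequality `∑ p log q ≤ ∑ p log p`, applied to two
softmax distributions, gives `(β' - β) E(β) ≤ log Z(β') - log Z(β) ≤ (β' - β) E(β')`.
Hence `E` is nondecreasing, and for `0 ≤ β ≤ β'` the right-hand bound yields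
`H(β') - H(β) ≤ β (E(β) - E(β')) ≤ 0`. -/

open Finset Real

lemma mul_sub_log_le_sub {p q : ℝ} (hp : 0 < p) (hq : 0 < q) :
    p * (log q - log p) ≤ q - p := by
  rw [← log_div hq.ne' hp.ne']
  calc p * log (q / p) ≤ p * (q / p - 1) :=
        mul_le_mul_of_nonneg_left (log_le_sub_one_of_pos (div_pos hq hp)) hp.le
    _ = q - p := by field_simp

lemma sum_mul_log_le_sum_mul_log {ι : Type*} [Fintype ι] {p q : ι → ℝ}
    (hp : ∀ j, 0 < p j) (hq : ∀ j, 0 < q j) (hsum : ∑ j, q j ≤ ∑ j, p j) :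
    ∑ j, p j * log (q j) ≤ ∑ j, p j * log (p j) := by
  have h : ∑ j, p j * (log (q j) - log (p j)) ≤ ∑ j, (q j - p j) :=
    sum_le_sum fun j _ ↦ mul_sub_log_le_sub (hp j) (hq j)
  simp only [mul_sub, sum_sub_distrib] at h
  linarith

section Softmax

variable {ι : Type*} [Fintype ι]

noncomputable def softmax (x : ι → ℝ) (j : ι) : ℝ := exp (x j) / ∑ k, exp (x k)

noncomputable def entropy (p : ι → ℝ) : ℝ := -∑ j, p j * log (p j)

variable [Nonempty ι]

lemma sum_exp_pos (x : ι → ℝ) : 0 < ∑ k, exp (x k) :=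
  sum_pos (fun k _ ↦ exp_pos (x k)) univ_nonempty

lemma softmax_pos (x : ι → ℝ) (j : ι) : 0 < softmax x j :=
  div_pos (exp_pos _) (sum_exp_pos x)

lemma sum_softmax (x : ι → ℝ) : ∑ j, softmax x j = 1 := by
  simp only [softmax]
  rw [← sum_div, div_self (sum_exp_pos x).ne']

lemma log_softmax (x : ι → ℝ) (j : ι) : log (softmax x j) = x j - log (∑ k, exp (x k)) := by
  rw [softmax, log_div (exp_pos _).ne' (sum_exp_pos x).ne', log_exp]

lemma sum_softmax_mul_log_softmax (x y : ι → ℝ) :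
    ∑ j, softmax x j * log (softmax y j) = ∑ j, softmax x j * y j - log (∑ k, exp (y k)) := by
  simp only [log_softmax, mul_sub, sum_sub_distrib, ← sum_mul, sum_softmax, one_mul]

lemma entropy_softmax (x : ι → ℝ) :
    entropy (softmax x) = log (∑ k, exp (x k)) - ∑ j, softmax x j * x j := by
  rw [entropy, sum_softmax_mul_log_softmax, neg_sub]

lemma sum_softmax_mul_sub_log_sum_exp_le (x y : ι → ℝ) :
    ∑ j, softmax x j * y j - log (∑ k, exp (y k)) ≤
      ∑ j, softmax x j * x j - log (∑ k, exp (x k)) := by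
  rw [← sum_softmax_mul_log_softmax, ← sum_softmax_mul_log_softmax]
  exact sum_mul_log_le_sum_mul_log (softmax_pos x) (softmax_pos y)
    (by rw [sum_softmax, sum_softmax])

end Softmax

section InverseTemperature

variable {ι : Type*} [Fintype ι] (r : ι → ℝ)

noncomputable def logPartition (β : ℝ) : ℝ := log (∑ k, exp (β * r k))

noncomputable def gibbsMean (β : ℝ) : ℝ := ∑ j, softmax (fun k ↦ β * r k) j * r j

variable [Nonempty ι]

lemma mul_gibbsMean_sub_logPartition_le (β β' : ℝ) :
    β' * gibbsMean r β - logPartition r β' ≤ β * gibbsMean r β - logPartition r β := by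
  have h := sum_softmax_mul_sub_log_sum_exp_le (fun k ↦ β * r k) (fun k ↦ β' * r k)
  simp only [gibbsMean, logPartition, mul_sum, mul_left_comm β', mul_left_comm β] at h ⊢
  exact h

lemma entropy_softmax_mul (β : ℝ) :
    entropy (softmax fun k ↦ β * r k) = logPartition r β - β * gibbsMean r β := by
  simp only [entropy_softmax, logPartition, gibbsMean, mul_sum, mul_left_comm β]

lemma monotone_gibbsMean : Monotone (gibbsMean r) := by
  intro β β' hβ
  have h := mul_gibbsMean_sub_logPartition_le r β β'
  have h' := mul_gibbsMean_sub_logPartition_le r β' β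
  rcases hβ.eq_or_lt with rfl | hlt
  · rfl
  · nlinarith

end InverseTemperature

lemma entropy_softmax_mul_antitone {ι : Type*} [Fintype ι] (r : ι → ℝ) {β β' : ℝ}
    (hβ : 0 ≤ β) (hββ' : β ≤ β') :
    entropy (softmax fun k ↦ β' * r k) ≤ entropy (softmax fun k ↦ β * r k) := by
  cases isEmpty_or_nonempty ι
  · simp [entropy]
  rw [entropy_softmax_mul, entropy_softmax_mul]
  have hZ := mul_gibbsMean_sub_logPartition_le r β' β
  have hE := monotone_gibbsMean r hββ'
  nlinarith

theorem softmax_entropy_monotone_in_temperature (N : ℕ) (r : Fin N → ℝ)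
    (γ₁ γ₂ : ℝ) (h₁ : 0 < γ₁) (h₁₂ : γ₁ ≤ γ₂) :
    (-∑ j, (Real.exp (r j / γ₁) / ∑ k, Real.exp (r k / γ₁)) *
        Real.log (Real.exp (r j / γ₁) / ∑ k, Real.exp (r k / γ₁))) ≤
    (-∑ j, (Real.exp (r j / γ₂) / ∑ k, Real.exp (r k / γ₂)) *
        Real.log (Real.exp (r j / γ₂) / ∑ k, Real.exp (r k / γ₂))) := by
  have h := entropy_softmax_mul_antitone r (inv_nonneg.2 (h₁.trans_le h₁₂).le)
    (inv_anti₀ h₁ h₁₂)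
  simpa only [entropy, softmax, inv_mul_eq_div] using h
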